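/- Let σ ∈ {1, −1}. Let S ⊆ ℂ be open with 0 ∉ S, and let v : ℂ → ℂ be holomorphic on S and satisfy for all s ∈ S the equation (s⁷/4)·v''(s) + (3/4)·s⁶·v'(s) − 2σ√3·v(s) = 3s·v(s)² + (σ/(4√3))·s⁴. Let W ⊆ ℂ be open and let w : W → ℂ be a holomorphic branch of the square root on W, i.e., w is holomorphic with w(z)² = z and w(z) ≠ 0 for all z ∈ W, and assume 1/w(z) ∈ S for all z ∈ W. Define Ω(z) := σ·w(z)/√3 + v(1/w(z)). Then Ω is holomorphic on W and satisfies the Painlevé I equation Ω''(z) = 3Ω(z)² − z for all z ∈ W. -/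

import Mathlib

/-!
Write `u = 1/w`. Differentiating `w² = z` gives `w' = u/2`, hence `u' = -u³/2` and
`w'' = -u³/4`, and the chain rule gives `Ω'' = -σu³/(4√3) + u⁶ v''(u)/4 + 3u⁵ v'(u)/4`.
Multiplying by `u` and substituting the remainder equation at `s = u` yields
`Ω'' = 3 v(u)² + 2σ√3 w v(u)`, which is `3Ω² - z` because `σ² = 1` and `w² = z`.
-/

open Filter Topology

theorem deriv_deriv_eq_of_hasDerivAt {𝕜 : Type*} [NontriviallyNormedField 𝕜]
    {f f' : 𝕜 → 𝕜} {f'' z : 𝕜} {U : Set 𝕜} (hU : IsOpen U) (hz : z ∈ U)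
    (hf : ∀ y ∈ U, HasDerivAt f (f' y) y) (hf' : HasDerivAt f' f'' z) :
    deriv (deriv f) z = f'' := by
  have hderiv : deriv f =ᶠ[𝓝 z] f' :=
    eventually_of_mem (hU.mem_nhds hz) fun y hy => (hf y hy).deriv
  rw [hderiv.deriv_eq, hf'.deriv]

section SqrtBranch

variable {𝕜 : Type*} [NontriviallyNormedField 𝕜] {w : 𝕜 → 𝕜} {z : 𝕜}

theorem two_mul_mul_deriv_eq_one_of_sq_eventuallyEq (hw : DifferentiableAt 𝕜 w z)
    (hsq : ∀ᶠ y in 𝓝 z, w y ^ 2 = y) : 2 * w z * deriv w z = 1 := by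
  have hsq' : HasDerivAt (fun y => w y ^ 2) (2 * w z * deriv w z) z := by
    simpa using hw.hasDerivAt.fun_pow 2
  exact hsq'.unique ((hasDerivAt_id z).congr_of_eventuallyEq hsq)

theorem ne_zero_of_sq_eventuallyEq (hw : DifferentiableAt 𝕜 w z)
    (hsq : ∀ᶠ y in 𝓝 z, w y ^ 2 = y) : w z ≠ 0 := by
  intro h
  simpa [h] using two_mul_mul_deriv_eq_one_of_sq_eventuallyEq hw hsq

theorem hasDerivAt_of_sq_eventuallyEq (hw : DifferentiableAt 𝕜 w z)
    (hsq : ∀ᶠ y in 𝓝 z, w y ^ 2 = y) : HasDerivAt w ((w z)⁻¹ / 2) z := by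
  have hderiv : deriv w z = (w z)⁻¹ / 2 := by
    rw [eq_inv_of_mul_eq_one_right (two_mul_mul_deriv_eq_one_of_sq_eventuallyEq hw hsq)]
    ring
  exact hderiv ▸ hw.hasDerivAt

theorem hasDerivAt_inv_of_sq_eventuallyEq (hw : DifferentiableAt 𝕜 w z)
    (hsq : ∀ᶠ y in 𝓝 z, w y ^ 2 = y) :
    HasDerivAt (fun y => (w y)⁻¹) (-(w z)⁻¹ ^ 3 / 2) z :=
  ((hasDerivAt_of_sq_eventuallyEq hw hsq).inv (ne_zero_of_sq_eventuallyEq hw hsq)).congr_deriv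
    (by ring)

end SqrtBranch

section Ansatz

variable {𝕜 : Type*} [NontriviallyNormedField 𝕜] {σ c : 𝕜} {v w : 𝕜 → 𝕜} {z : 𝕜}

theorem hasDerivAt_ansatz (hw : DifferentiableAt 𝕜 w z) (hsq : ∀ᶠ y in 𝓝 z, w y ^ 2 = y)
    (hv : DifferentiableAt 𝕜 v (w z)⁻¹) :
    HasDerivAt (fun y => σ * w y / c + v (w y)⁻¹)
      (σ * ((w z)⁻¹ / 2) / c + deriv v (w z)⁻¹ * (-(w z)⁻¹ ^ 3 / 2)) z :=
  (((hasDerivAt_of_sq_eventuallyEq hw hsq).const_mul σ).div_const c).add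
    (hv.hasDerivAt.comp z (hasDerivAt_inv_of_sq_eventuallyEq hw hsq))

theorem hasDerivAt_deriv_ansatz [CharZero 𝕜] (hw : DifferentiableAt 𝕜 w z)
    (hsq : ∀ᶠ y in 𝓝 z, w y ^ 2 = y) (hv' : DifferentiableAt 𝕜 (deriv v) (w z)⁻¹) :
    HasDerivAt (fun y => σ * ((w y)⁻¹ / 2) / c + deriv v (w y)⁻¹ * (-(w y)⁻¹ ^ 3 / 2))
      (-σ * (w z)⁻¹ ^ 3 / (4 * c) + (w z)⁻¹ ^ 6 / 4 * deriv (deriv v) (w z)⁻¹ +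
        3 * (w z)⁻¹ ^ 5 / 4 * deriv v (w z)⁻¹) z := by
  have hu := hasDerivAt_inv_of_sq_eventuallyEq hw hsq
  refine ((((hu.div_const 2).const_mul σ).div_const c).add
    ((hv'.hasDerivAt.comp z hu).mul ((hu.fun_pow 3).neg.div_const 2))).congr_deriv ?_
  simp only [Function.comp_apply, Pi.neg_apply]
  ring

end Ansatz

theorem ansatz_second_deriv_eq_of_remainder_eq {K : Type*} [Field K] [CharZero K]
    {σ c w u z v v' v'' : K} (hσ : σ ^ 2 = 1) (hc : c ^ 2 = 3) (hwu : w * u = 1)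
    (hz : w ^ 2 = z)
    (H : u ^ 7 / 4 * v'' + 3 / 4 * u ^ 6 * v' - 2 * σ * c * v =
      3 * u * v ^ 2 + σ / (4 * c) * u ^ 4) :
    -σ * u ^ 3 / (4 * c) + u ^ 6 / 4 * v'' + 3 * u ^ 5 / 4 * v' =
      3 * (σ * w / c + v) ^ 2 - z := by
  have hc0 : c ≠ 0 := by rintro rfl; norm_num at hc
  field_simp
  field_simp at H
  linear_combination c * w * H +
    (σ * c * u ^ 3 + 12 * c ^ 2 * v ^ 2 - c ^ 2 * u ^ 6 * v'' - 3 * c ^ 2 * u ^ 5 * v') * hwu +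
    (8 * σ * c * w * v + 4 * z) * hc - 12 * w ^ 2 * hσ - 12 * hz

theorem painleveI_from_remainder_general
    (σ : ℂ) (hσ : σ = 1 ∨ σ = -1)
    (S : Set ℂ) (hS : IsOpen S)
    (v : ℂ → ℂ) (hv : DifferentiableOn ℂ v S)
    (hveq : ∀ s ∈ S,
      s ^ 7 / 4 * deriv (deriv v) s + 3 / 4 * s ^ 6 * deriv v s -
          2 * σ * (Real.sqrt 3 : ℂ) * v s =
        3 * s * v s ^ 2 + σ / (4 * (Real.sqrt 3 : ℂ)) * s ^ 4)
    (W : Set ℂ) (hW : IsOpen W)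
    (w : ℂ → ℂ) (hw : DifferentiableOn ℂ w W)
    (hsq : ∀ z ∈ W, w z ^ 2 = z)
    (hwS : ∀ z ∈ W, (w z)⁻¹ ∈ S) :
    DifferentiableOn ℂ
      (fun z : ℂ => σ * w z / (Real.sqrt 3 : ℂ) + v (w z)⁻¹) W ∧
    ∀ z ∈ W,
      deriv (deriv (fun z : ℂ => σ * w z / (Real.sqrt 3 : ℂ) + v (w z)⁻¹)) z =
        3 * (σ * w z / (Real.sqrt 3 : ℂ) + v (w z)⁻¹) ^ 2 - z := by
  have hσ2 : σ ^ 2 = 1 := by rcases hσ with rfl | rfl <;> norm_num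
  have hc : (Real.sqrt 3 : ℂ) ^ 2 = 3 := by norm_cast; simp
  have hwz : ∀ z ∈ W, DifferentiableAt ℂ w z :=
    fun z hz => hw.differentiableAt (hW.mem_nhds hz)
  have hsqz : ∀ z ∈ W, ∀ᶠ y in 𝓝 z, w y ^ 2 = y :=
    fun z hz => eventually_of_mem (hW.mem_nhds hz) hsq
  have hvz : ∀ z ∈ W, DifferentiableAt ℂ v (w z)⁻¹ :=
    fun z hz => hv.differentiableAt (hS.mem_nhds (hwS z hz))
  have hv'z : ∀ z ∈ W, DifferentiableAt ℂ (deriv v) (w z)⁻¹ :=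
    fun z hz => ((hv.analyticOnNhd hS).deriv _ (hwS z hz)).differentiableAt
  have hΩ := fun z hz =>
    hasDerivAt_ansatz (σ := σ) (c := (Real.sqrt 3 : ℂ)) (hwz z hz) (hsqz z hz) (hvz z hz)
  refine ⟨fun z hz => (hΩ z hz).differentiableAt.differentiableWithinAt, fun z hz => ?_⟩
  rw [deriv_deriv_eq_of_hasDerivAt hW hz hΩ
    (hasDerivAt_deriv_ansatz (hwz z hz) (hsqz z hz) (hv'z z hz))]
  have hwu := mul_inv_cancel₀ (ne_zero_of_sq_eventuallyEq (hwz z hz) (hsqz z hz))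
  exact ansatz_second_deriv_eq_of_remainder_eq hσ2 hc hwu (hsq z hz) (hveq _ (hwS z hz))

/-- Converse direction: from a solution `v` of the remainder equation
and a holomorphic branch `w` of the square root, the function
`Ω(z) = σ w(z)/√3 + v(1/w(z))` is holomorphic and solves Painlevé I. -/
theorem painleveI_from_remainder
    (σ : ℂ) (hσ : σ = 1 ∨ σ = -1)
    (S : Set ℂ) (hS : IsOpen S) (h0 : (0 : ℂ) ∉ S)
    (v : ℂ → ℂ) (hv : DifferentiableOn ℂ v S)
    (hveq : ∀ s ∈ S,
      s ^ 7 / 4 * deriv (deriv v) s + 3 / 4 * s ^ 6 * deriv v s -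
          2 * σ * (Real.sqrt 3 : ℂ) * v s =
        3 * s * v s ^ 2 + σ / (4 * (Real.sqrt 3 : ℂ)) * s ^ 4)
    (W : Set ℂ) (hW : IsOpen W)
    (w : ℂ → ℂ) (hw : DifferentiableOn ℂ w W)
    (hsq : ∀ z ∈ W, w z ^ 2 = z) (hwne : ∀ z ∈ W, w z ≠ 0)
    (hwS : ∀ z ∈ W, (w z)⁻¹ ∈ S) :
    DifferentiableOn ℂ
      (fun z : ℂ => σ * w z / (Real.sqrt 3 : ℂ) + v (w z)⁻¹) W ∧
    ∀ z ∈ W,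
      deriv (deriv (fun z : ℂ => σ * w z / (Real.sqrt 3 : ℂ) + v (w z)⁻¹)) z =
        3 * (σ * w z / (Real.sqrt 3 : ℂ) + v (w z)⁻¹) ^ 2 - z :=
  painleveI_from_remainder_general σ hσ S hS v hv hveq W hW w hw hsq hwS
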